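/- arXiv:2309.17316 — 5 statements merged into one kernel-verified Lean document; each statement's English description precedes it below -/
import Mathlib

section
/- For every η ∈ (0, 1/2), β > 0, τ̄ > 0 and every λ with 0 ≤ λ ≤ log(1/η)/(2βτ̄), the inequality log((1-η)/(1 - η e^{λβτ̄})) ≤ 2λβτ̄/(log(1/η))² holds (in particular 1 - η e^{λβτ̄} > 0 in this range). -/
/-!
Write `L = log (1/η)`, `t = λβτ̄ ∈ [0, L/2]` and `s = √η`, so that `exp (L/2) = 1/s`.
Convexity of `exp` on `[0, L/2]` gives `η eᵗ ≤ η + (2t/L)(s - η) ≤ s < 1`. Then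
`log x ≤ x - 1` bounds the logarithm by `(η eᵗ - η)/(1 - η eᵗ) ≤ (2t/L)(s - η)/(1 - s) = 2ts/L`,
and `s L ≤ 2/e < 1` (from `e x ≤ eˣ` at `x = L/2`) finishes.
-/

open Real

namespace Real

theorem sqrt_sub_self_eq_mul {η : ℝ} (hη : 0 ≤ η) : √η - η = √η * (1 - √η) := by
  nth_rewrite 2 [← sq_sqrt hη]; ring

theorem exp_half_log_one_div {η : ℝ} (hη : 0 < η) : exp (log (1 / η) / 2) = 1 / √η := by
  rw [exp_half, exp_log (by positivity), sqrt_div' _ hη.le, sqrt_one]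

theorem sqrt_mul_log_one_div_le_one {η : ℝ} (hη : 0 < η) : √η * log (1 / η) ≤ 1 := by
  have h := exp_one_mul_le_exp (x := log (1 / η) / 2)
  rw [exp_half_log_one_div hη, le_div_iff₀ (sqrt_pos.2 hη)] at h
  nlinarith [exp_one_gt_two, sqrt_nonneg η]

theorem exp_le_one_add_div_mul_exp_sub_one {t T : ℝ} (hT : 0 < T) (ht : 0 ≤ t) (htT : t ≤ T) :
    exp t ≤ 1 + t / T * (exp T - 1) := by
  have h := convexOn_exp.2 (Set.mem_univ 0) (Set.mem_univ T)
    (sub_nonneg.2 ((div_le_one hT).2 htT)) (div_nonneg ht hT.le) (sub_add_cancel 1 (t / T))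
  simp only [smul_eq_mul, mul_zero, zero_add, exp_zero, mul_one, div_mul_cancel₀ t hT.ne'] at h
  linarith

theorem log_one_sub_div_one_sub_le {η a : ℝ} (hη : η < 1) (ha : a < 1) :
    log ((1 - η) / (1 - a)) ≤ (a - η) / (1 - a) := by
  have hpos : 0 < 1 - a := sub_pos.2 ha
  calc log ((1 - η) / (1 - a)) ≤ (1 - η) / (1 - a) - 1 :=
        log_le_sub_one_of_pos (div_pos (sub_pos.2 hη) hpos)
    _ = (a - η) / (1 - a) := by field_simp; ring

end Real

section

variable {η t : ℝ}

theorem mul_exp_le_of_le_half_log (hη0 : 0 < η) (hη1 : η < 1) (ht : 0 ≤ t)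
    (htL : t ≤ log (1 / η) / 2) :
    η * exp t ≤ η + 2 * t / log (1 / η) * (√η - η) := by
  have hL : 0 < log (1 / η) := log_pos (one_lt_one_div hη0 hη1)
  have hchord := exp_le_one_add_div_mul_exp_sub_one (by positivity) ht htL
  rw [exp_half_log_one_div hη0, div_div_eq_mul_div, mul_comm t 2] at hchord
  have hη_sqrt : η * (1 / √η - 1) = √η - η := by
    rw [mul_sub, mul_one_div, div_sqrt, mul_one]
  calc η * exp t ≤ η * (1 + 2 * t / log (1 / η) * (1 / √η - 1)) :=
        mul_le_mul_of_nonneg_left hchord hη0.le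
    _ = η + 2 * t / log (1 / η) * (√η - η) := by rw [← hη_sqrt]; ring

theorem mul_exp_le_sqrt_of_le_half_log (hη0 : 0 < η) (hη1 : η < 1) (ht : 0 ≤ t)
    (htL : t ≤ log (1 / η) / 2) : η * exp t ≤ √η := by
  have hL : 0 < log (1 / η) := log_pos (one_lt_one_div hη0 hη1)
  have hu1 : 2 * t / log (1 / η) ≤ 1 := by rw [div_le_one hL]; linarith
  linarith [mul_exp_le_of_le_half_log hη0 hη1 ht htL,
    mul_le_of_le_one_left (sub_nonneg.2 (le_sqrt_self_iff.2 hη1.le)) hu1]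

theorem log_one_sub_div_one_sub_mul_exp_le (hη0 : 0 < η) (hη1 : η < 1) (ht : 0 ≤ t)
    (htL : t ≤ log (1 / η) / 2) :
    log ((1 - η) / (1 - η * exp t)) ≤ 2 * t * √η / log (1 / η) := by
  have hL : 0 < log (1 / η) := log_pos (one_lt_one_div hη0 hη1)
  have hs1 : √η < 1 := (sqrt_lt' one_pos).2 (by linarith)
  have hsη : 0 ≤ √η - η := sub_nonneg.2 (le_sqrt_self_iff.2 hη1.le)
  have hle_sqrt := mul_exp_le_sqrt_of_le_half_log hη0 hη1 ht htL
  calc log ((1 - η) / (1 - η * exp t)) ≤ (η * exp t - η) / (1 - η * exp t) :=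
        log_one_sub_div_one_sub_le hη1 (by linarith)
    _ ≤ 2 * t / log (1 / η) * (√η - η) / (1 - √η) := by
        gcongr
        linarith [mul_exp_le_of_le_half_log hη0 hη1 ht htL]
    _ = 2 * t * √η / log (1 / η) := by
        rw [sqrt_sub_self_eq_mul hη0.le]; field_simp [(by linarith : 1 - √η ≠ 0)]

end

theorem log_ratio_bound (η β τ l : ℝ) (hη0 : 0 < η) (hη : η < 1 / 2)
    (hβ : 0 < β) (hτ : 0 < τ) (hl0 : 0 ≤ l)
    (hl : l ≤ Real.log (1 / η) / (2 * β * τ)) :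
    0 < 1 - η * Real.exp (l * β * τ) ∧
    Real.log ((1 - η) / (1 - η * Real.exp (l * β * τ))) ≤
      2 * l * β * τ / (Real.log (1 / η)) ^ 2 := by
  have hη1 : η < 1 := by linarith
  have hL : 0 < log (1 / η) := log_pos (one_lt_one_div hη0 hη1)
  have ht : 0 ≤ l * β * τ := by positivity
  have htL : l * β * τ ≤ log (1 / η) / 2 := by
    rw [le_div_iff₀ (by positivity)] at hl
    linarith
  have hs1 : √η < 1 := (sqrt_lt' one_pos).2 (by linarith)
  refine ⟨?_, ?_⟩
  · linarith [mul_exp_le_sqrt_of_le_half_log hη0 hη1 ht htL]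
  · calc _ ≤ 2 * (l * β * τ) * √η / log (1 / η) :=
          log_one_sub_div_one_sub_mul_exp_le hη0 hη1 ht htL
      _ ≤ 2 * l * β * τ / log (1 / η) ^ 2 := by
          rw [div_le_div_iff₀ hL (by positivity)]
          nlinarith [sqrt_mul_log_one_div_le_one hη0, mul_nonneg ht hL.le]
end

section
/- Consider the real Markov chain X_{t+1} = αX_t + ξ_t with probability 1-η and X_{t+1} = X_t + τ with probability η, where α ∈ (0,1), τ > 0, η ∈ (0,1), and ξ_t ≥ 0 i.i.d. Suppose X follows a stationary distribution with all moments finite, M_k = (E[X^k])^{1/k} for X ≥ 0. Then the stationary moments satisfy (1-η)(1-α^k) E[X^k] ≥ η Σ_{j=1}^{k} C(k,j) τ^j E[X^{k-j}] for all k ≥ 1. -/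
/-!
Condition on the coin `U`, which is independent of the current state and noise: stationarity
gives `E[X^k] = η E[(X + τ)^k] + (1 - η) E[(α X + ξ)^k]`. Expanding the first moment binomially
and bounding the second below by `α^k E[X^k]` (all terms are nonnegative) leaves the inequality.
-/

open MeasureTheory ProbabilityTheory

lemma comp_bernoulli_mix {u : ℝ} (hu : u = 0 ∨ u = 1) (f : ℝ → ℝ) (a b : ℝ) :
    f (u * a + (1 - u) * b) = u * f a + (1 - u) * f b := by
  rcases hu with rfl | rfl <;> simp

section Moments

variable {Ω : Type*} [MeasurableSpace Ω] {μ : Measure Ω}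

lemma integral_bernoulli_mix [IsProbabilityMeasure μ] {U A B : Ω → ℝ}
    (hU01 : ∀ ω, U ω = 0 ∨ U ω = 1) (hU : Measurable U)
    (hUA : IndepFun U A μ) (hUB : IndepFun U B μ) (hA : Integrable A μ) (hB : Integrable B μ) :
    ∫ ω, U ω * A ω + (1 - U ω) * B ω ∂μ
      = (∫ ω, U ω ∂μ) * ∫ ω, A ω ∂μ + (1 - ∫ ω, U ω ∂μ) * ∫ ω, B ω ∂μ := by
  have hUint : Integrable U μ :=
    .of_mem_Icc 0 1 hU.aemeasurable
      (.of_forall fun ω => by rcases hU01 ω with h | h <;> simp [h])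
  have hUAint : Integrable (U * A) μ := hUA.integrable_mul hUint hA
  have hUBint : Integrable (U * B) μ := hUB.integrable_mul hUint hB
  have hsplit : (fun ω => U ω * A ω + (1 - U ω) * B ω) = U * A + (B - U * B) := by
    ext ω; simp only [Pi.add_apply, Pi.sub_apply, Pi.mul_apply]; ring
  rw [hsplit, integral_add' hUAint (hB.sub hUBint), integral_sub' hB hUBint,
    hUA.integral_mul_eq_mul_integral hU.aestronglyMeasurable hA.aestronglyMeasurable,
    hUB.integral_mul_eq_mul_integral hU.aestronglyMeasurable hB.aestronglyMeasurable]
  ring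

lemma integrable_add_pow_of_nonneg {f g : Ω → ℝ} (hf0 : ∀ ω, 0 ≤ f ω) (hg0 : ∀ ω, 0 ≤ g ω)
    (hf : AEStronglyMeasurable f μ) (hg : AEStronglyMeasurable g μ) {k : ℕ}
    (hfk : Integrable (fun ω => f ω ^ k) μ) (hgk : Integrable (fun ω => g ω ^ k) μ) :
    Integrable (fun ω => (f ω + g ω) ^ k) μ := by
  refine .mono' ((hfk.add hgk).const_mul (2 ^ (k - 1))) ((hf.add hg).pow k)
    (.of_forall fun ω => ?_)
  rw [Real.norm_of_nonneg (pow_nonneg (add_nonneg (hf0 ω) (hg0 ω)) k)]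
  exact add_pow_le (hf0 ω) (hg0 ω) k

variable {X : Ω → ℝ} (hX : ∀ n : ℕ, Integrable (fun ω => X ω ^ n) μ) (c : ℝ) (k : ℕ)
include hX

lemma integrable_add_const_pow : Integrable (fun ω => (X ω + c) ^ k) μ := by
  simp_rw [add_pow]
  exact integrable_finsetSum _ fun j _ => ((hX j).mul_const _).mul_const _

lemma integral_add_const_pow :
    ∫ ω, (X ω + c) ^ k ∂μ = ∫ ω, X ω ^ k ∂μ
      + ∑ j ∈ Finset.Icc 1 k, (k.choose j : ℝ) * c ^ j * ∫ ω, X ω ^ (k - j) ∂μ := by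
  have hterm : ∀ j ∈ Finset.range (k + 1),
      ∫ ω, c ^ j * X ω ^ (k - j) * (k.choose j : ℝ) ∂μ
        = (k.choose j : ℝ) * c ^ j * ∫ ω, X ω ^ (k - j) ∂μ := fun j _ => by
    simp_rw [mul_comm (c ^ j * _), ← mul_assoc]
    exact integral_const_mul _ _
  simp_rw [add_comm (X _) c, add_pow]
  rw [integral_finsetSum _ fun j _ => ((hX _).const_mul _).mul_const _,
    Finset.sum_congr rfl hterm, Finset.range_eq_Ico,
    Finset.sum_eq_sum_Ico_succ_bot (by omega : 0 < k + 1), Finset.Ico_add_one_right_eq_Icc]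
  simp

end Moments

theorem stationary_moments_corrupted_chain_general
    {Ω : Type*} [MeasurableSpace Ω] (μ : Measure Ω) [IsProbabilityMeasure μ]
    (X ξ U : Ω → ℝ)
    (hXmeas : Measurable X) (hξmeas : Measurable ξ) (hUmeas : Measurable U)
    (hXnn : ∀ ω, 0 ≤ X ω) (hξnn : ∀ ω, 0 ≤ ξ ω)
    (α τ η : ℝ) (hα0 : 0 < α)
    (hη1 : η < 1)
    (hU01 : ∀ ω, U ω = 0 ∨ U ω = 1)
    (hUmean : ∫ ω, U ω ∂μ = η)
    (hindep : IndepFun U (fun ω => (X ω, ξ ω)) μ)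
    (hstat : Measure.map
        (fun ω => U ω * (X ω + τ) + (1 - U ω) * (α * X ω + ξ ω)) μ
      = Measure.map X μ)
    (hmom : ∀ k : ℕ, Integrable (fun ω => X ω ^ k) μ ∧
      Integrable (fun ω => ξ ω ^ k) μ) :
    ∀ k : ℕ, 1 ≤ k →
      η * ∑ j ∈ Finset.Icc 1 k,
          (k.choose j : ℝ) * τ ^ j * ∫ ω, X ω ^ (k - j) ∂μ ≤
        (1 - η) * (1 - α ^ k) * ∫ ω, X ω ^ k ∂μ := by
  intro k _
  have hXk : ∀ n : ℕ, Integrable (fun ω => X ω ^ n) μ := fun n => (hmom n).1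
  have hαXk : Integrable (fun ω => (α * X ω) ^ k) μ := by
    simpa only [mul_pow] using (hXk k).const_mul (α ^ k)
  have hB : Integrable (fun ω => (α * X ω + ξ ω) ^ k) μ :=
    integrable_add_pow_of_nonneg (fun ω => mul_nonneg hα0.le (hXnn ω)) hξnn
      (by fun_prop) hξmeas.aestronglyMeasurable hαXk (hmom k).2
  have hstat_pow : ∫ ω, (U ω * (X ω + τ) + (1 - U ω) * (α * X ω + ξ ω)) ^ k ∂μ
      = ∫ ω, X ω ^ k ∂μ :=
    ((IdentDistrib.mk (by fun_prop) hXmeas.aemeasurable hstat).comp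
      (measurable_id.pow_const k)).integral_eq
  have hmix : ∫ ω, X ω ^ k ∂μ
      = η * ∫ ω, (X ω + τ) ^ k ∂μ + (1 - η) * ∫ ω, (α * X ω + ξ ω) ^ k ∂μ := by
    simp_rw [← hstat_pow, comp_bernoulli_mix (hU01 _) (· ^ k), ← hUmean]
    have hindep_of : ∀ g : ℝ × ℝ → ℝ, Measurable g → IndepFun U (fun ω => g (X ω, ξ ω)) μ :=
      fun g hg => hindep.comp measurable_id hg
    exact integral_bernoulli_mix hU01 hUmeas (hindep_of (fun p => (p.1 + τ) ^ k) (by fun_prop))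
      (hindep_of (fun p => (α * p.1 + p.2) ^ k) (by fun_prop))
      (integrable_add_const_pow hXk τ k) hB
  have hB_lower : α ^ k * ∫ ω, X ω ^ k ∂μ ≤ ∫ ω, (α * X ω + ξ ω) ^ k ∂μ := by
    rw [← integral_const_mul]
    refine integral_mono ((hXk k).const_mul _) hB fun ω => ?_
    rw [← mul_pow]
    exact pow_le_pow_left₀ (mul_nonneg hα0.le (hXnn ω)) (le_add_of_nonneg_right (hξnn ω)) k
  rw [integral_add_const_pow hXk] at hmix
  nlinarith [mul_le_mul_of_nonneg_left hB_lower (sub_nonneg.mpr hη1.le)]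

theorem stationary_moments_corrupted_chain
    {Ω : Type*} [MeasurableSpace Ω] (μ : Measure Ω) [IsProbabilityMeasure μ]
    (X ξ U : Ω → ℝ)
    (hXmeas : Measurable X) (hξmeas : Measurable ξ) (hUmeas : Measurable U)
    (hXnn : ∀ ω, 0 ≤ X ω) (hξnn : ∀ ω, 0 ≤ ξ ω)
    (α τ η : ℝ) (hα0 : 0 < α) (hα1 : α < 1) (hτ : 0 < τ)
    (hη0 : 0 < η) (hη1 : η < 1)
    (hU01 : ∀ ω, U ω = 0 ∨ U ω = 1)
    (hUmean : ∫ ω, U ω ∂μ = η)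
    (hindep : IndepFun U (fun ω => (X ω, ξ ω)) μ)
    (hstat : Measure.map
        (fun ω => U ω * (X ω + τ) + (1 - U ω) * (α * X ω + ξ ω)) μ
      = Measure.map X μ)
    (hmom : ∀ k : ℕ, Integrable (fun ω => X ω ^ k) μ ∧
      Integrable (fun ω => ξ ω ^ k) μ) :
    ∀ k : ℕ, 1 ≤ k →
      η * ∑ j ∈ Finset.Icc 1 k,
          (k.choose j : ℝ) * τ ^ j * ∫ ω, X ω ^ (k - j) ∂μ ≤
        (1 - η) * (1 - α ^ k) * ∫ ω, X ω ^ k ∂μ :=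
  stationary_moments_corrupted_chain_general μ X ξ U hXmeas hξmeas hUmeas hXnn hξnn α τ η hα0 hη1
    hU01 hUmean hindep hstat hmom
end

section
/- Let (M_k)_{k≥0} be nonnegative reals with M_0 = 1 satisfying, for constants η ∈ (0,1), α ∈ (0,1), τ > 0, the recursion (1-η)(1-α^k) M_k^k ≥ η Σ_{j=1}^k C(k,j) τ^j M_{k-j}^{k-j} for all k ≥ 1. Then there exists C > 0 such that M_k ≥ Ck for all k ≥ 1; in particular the sequence M_k grows at least linearly in k and cannot satisfy M_k = O(√k). -/
/-!
Only the `j = 1` term of the recursion is needed. Writing `a k = M k ^ k`, it gives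
`a (k + 1) ≥ D (k + 1) a k` with `D = η τ / (1 - η)`, hence `M k ^ k ≥ D ^ k k!` since
`M 0 ^ 0 = 1`. With `k! ≥ (k / e) ^ k` this yields `M k ≥ (D / e) k`.
-/

open Finset Real Nat

theorem pow_div_exp_one_le_factorial (n : ℕ) : ((n : ℝ) / exp 1) ^ n ≤ n ! := by
  rw [div_pow, ← exp_nat_mul, mul_one, div_le_iff₀ (exp_pos _), mul_comm,
    ← div_le_iff₀ (mod_cast n.factorial_pos)]
  exact pow_div_factorial_le_exp _ n.cast_nonneg n

theorem pow_mul_factorial_mul_le_of_succ_mul_le {a : ℕ → ℝ} {D : ℝ} (hD : 0 ≤ D)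
    (h : ∀ k : ℕ, D * (k + 1) * a k ≤ a (k + 1)) (k : ℕ) : D ^ k * k ! * a 0 ≤ a k := by
  induction k with
  | zero => simp
  | succ k ih =>
    calc D ^ (k + 1) * (k + 1)! * a 0 = D * (k + 1) * (D ^ k * k ! * a 0) := by
          push_cast [factorial_succ]; ring
      _ ≤ D * (k + 1) * a k := by gcongr
      _ ≤ a (k + 1) := h k

theorem succ_mul_le_of_binomial_recursion {a : ℕ → ℝ} (ha : ∀ k, 0 ≤ a k) {η α τ : ℝ}
    (hη0 : 0 ≤ η) (hη1 : η < 1) (hα : 0 ≤ α) (hτ : 0 ≤ τ)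
    (hrec : ∀ k : ℕ, 1 ≤ k →
      η * ∑ j ∈ Icc 1 k, (k.choose j : ℝ) * τ ^ j * a (k - j) ≤ (1 - η) * (1 - α ^ k) * a k)
    (k : ℕ) : η * τ / (1 - η) * (k + 1) * a k ≤ a (k + 1) := by
  have first_term_le_sum : ((k : ℝ) + 1) * τ * a k ≤
      ∑ j ∈ Icc 1 (k + 1), ((k + 1).choose j : ℝ) * τ ^ j * a (k + 1 - j) := by
    calc ((k : ℝ) + 1) * τ * a k = ((k + 1).choose 1 : ℝ) * τ ^ 1 * a (k + 1 - 1) := by simp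
      _ ≤ _ := single_le_sum (f := fun j => ((k + 1).choose j : ℝ) * τ ^ j * a (k + 1 - j))
        (fun j _ => by have := ha (k + 1 - j); positivity) (left_mem_Icc.mpr (Nat.le_add_left 1 k))
  have drop_alpha : (1 - η) * (1 - α ^ (k + 1)) * a (k + 1) ≤ (1 - η) * a (k + 1) := by
    have := mul_nonneg (sub_nonneg.mpr hη1.le) (mul_nonneg (pow_nonneg hα (k + 1)) (ha (k + 1)))
    nlinarith
  rw [div_mul_eq_mul_div, div_mul_eq_mul_div, div_le_iff₀ (by linarith)]
  nlinarith [hrec (k + 1) (Nat.le_add_left 1 k)]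

theorem moments_grow_linearly_general
    (M : ℕ → ℝ) (hMnn : ∀ k, 0 ≤ M k)
    (η α τ : ℝ) (hη0 : 0 < η) (hη1 : η < 1) (hα0 : 0 < α)
    (hτ : 0 < τ)
    (hrec : ∀ k : ℕ, 1 ≤ k →
      η * ∑ j ∈ Finset.Icc 1 k, (k.choose j : ℝ) * τ ^ j * M (k - j) ^ (k - j) ≤
        (1 - η) * (1 - α ^ k) * M k ^ k) :
    ∃ C : ℝ, 0 < C ∧ ∀ k : ℕ, 1 ≤ k → C * k ≤ M k := by
  set D := η * τ / (1 - η)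
  have hD : 0 < D := div_pos (mul_pos hη0 hτ) (by linarith)
  refine ⟨D / exp 1, div_pos hD (exp_pos 1), fun k hk => ?_⟩
  have hstep := succ_mul_le_of_binomial_recursion (a := fun k => M k ^ k)
    (fun k => pow_nonneg (hMnn k) k) hη0.le hη1 hα0.le hτ.le hrec
  have hpow := pow_mul_factorial_mul_le_of_succ_mul_le hD.le hstep k
  refine le_of_pow_le_pow_left₀ (Nat.one_le_iff_ne_zero.mp hk) (hMnn k) ?_
  calc (D / exp 1 * k) ^ k = D ^ k * ((k : ℝ) / exp 1) ^ k := by rw [← mul_pow]; ring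
    _ ≤ D ^ k * k ! := by gcongr; exact pow_div_exp_one_le_factorial k
    _ ≤ M k ^ k := by simpa using hpow

theorem moments_grow_linearly
    (M : ℕ → ℝ) (hMnn : ∀ k, 0 ≤ M k) (hM0 : M 0 = 1)
    (η α τ : ℝ) (hη0 : 0 < η) (hη1 : η < 1) (hα0 : 0 < α) (hα1 : α < 1)
    (hτ : 0 < τ)
    (hrec : ∀ k : ℕ, 1 ≤ k →
      η * ∑ j ∈ Finset.Icc 1 k, (k.choose j : ℝ) * τ ^ j * M (k - j) ^ (k - j) ≤
        (1 - η) * (1 - α ^ k) * M k ^ k) :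
    ∃ C : ℝ, 0 < C ∧ ∀ k : ℕ, 1 ≤ k → C * k ≤ M k :=
  moments_grow_linearly_general M hMnn η α τ hη0 hη1 hα0 hτ hrec
end

section
/- Let N be even and suppose among points θ^{(1)},…,θ^{(N)} ∈ ℝ^d, strictly more than N/2 satisfy ‖θ^{(n)} - θ⋆‖ ≤ r for some θ⋆ ∈ ℝ^d and r > 0. For each i let r^{(i)}_{N/2} denote the N/2-th smallest value among (‖θ^{(i)} - θ^{(j)}‖)_{j=1..N}, and let î = argmin_i r^{(i)}_{N/2}. Then ‖θ^{(î)} - θ⋆‖ ≤ 3r. -/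
lemma robust_count_mono {N : ℕ} (d : Fin N → ℝ) {t t' : ℝ} (h : t ≤ t') :
    ({j : Fin N | d j ≤ t}).ncard ≤ ({j : Fin N | d j ≤ t'}).ncard :=
  Set.ncard_le_ncard (fun j hj => le_trans hj h) (Set.toFinite _)

lemma robust_sInf_mem {N : ℕ} (d : Fin N → ℝ) (k : ℝ)
    (hkN : k ≤ N) (hk : 0 < k) :
    sInf {t : ℝ | k ≤ (({j : Fin N | d j ≤ t}).ncard : ℝ)} ∈
      {t : ℝ | k ≤ (({j : Fin N | d j ≤ t}).ncard : ℝ)} := by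
  classical
  set S := {t : ℝ | k ≤ (({j : Fin N | d j ≤ t}).ncard : ℝ)} with hSdef
  have hSne : S.Nonempty := by
    obtain ⟨M, hM⟩ := Finite.exists_le d
    refine ⟨M, ?_⟩
    have : {j : Fin N | d j ≤ M} = Set.univ := by
      ext j; simp [hM j]
    simp only [hSdef, Set.mem_setOf_eq, this, Set.ncard_univ, Nat.card_eq_fintype_card,
      Fintype.card_fin]
    exact hkN
  set m := sInf S with hm
  set B : Finset (Fin N) := Finset.univ.filter (fun j => m < d j) with hB
  by_cases hBe : B = ∅
  · have hall : ∀ j, d j ≤ m := by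
      intro j
      by_contra hc
      push_neg at hc
      have : j ∈ B := by simp [hB, hc]
      simp [hBe] at this
    have : {j : Fin N | d j ≤ m} = Set.univ := by ext j; simp [hall j]
    simp only [hSdef, Set.mem_setOf_eq, this, Set.ncard_univ, Nat.card_eq_fintype_card,
      Fintype.card_fin]
    exact hkN
  · have hBne : B.Nonempty := Finset.nonempty_of_ne_empty hBe
    set δ := B.inf' hBne d with hδ
    have hmδ : m < δ := by
      rw [hδ, Finset.lt_inf'_iff]
      intro j hj
      simp [hB] at hj
      exact hj
    set t := (m + δ) / 2 with ht
    have hmt : m < t := by simp [ht]; linarith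
    have htδ : t < δ := by simp [ht]; linarith
    obtain ⟨u, hu, hut⟩ := exists_lt_of_csInf_lt hSne hmt
    have hcount : k ≤ (({j : Fin N | d j ≤ t}).ncard : ℝ) := by
      refine le_trans hu ?_
      exact_mod_cast robust_count_mono d hut.le
    have hsub : {j : Fin N | d j ≤ t} ⊆ {j : Fin N | d j ≤ m} := by
      intro j hj
      simp only [Set.mem_setOf_eq] at hj ⊢
      by_contra hc
      push_neg at hc
      have hjB : j ∈ B := by simp [hB, hc]
      have := Finset.inf'_le d hjB
      rw [← hδ] at this
      linarith
    have := Set.ncard_le_ncard hsub (Set.toFinite _)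
    refine le_trans hcount ?_
    exact_mod_cast this

theorem robust_aggregation_of_iterates
    {d N : ℕ} (hNpos : 0 < N) (hNeven : Even N)
    (θ : Fin N → EuclideanSpace ℝ (Fin d))
    (θs : EuclideanSpace ℝ (Fin d)) (r : ℝ) (hr : 0 < r)
    (hmaj : (N : ℝ) / 2 < ({n : Fin N | ‖θ n - θs‖ ≤ r} : Set (Fin N)).ncard)
    (s : Fin N → ℝ)
    (hs : ∀ i, s i = sInf {t : ℝ |
      (N : ℝ) / 2 ≤ (({j : Fin N | ‖θ i - θ j‖ ≤ t} : Set (Fin N)).ncard : ℝ)})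
    (ihat : Fin N) (hihat : ∀ i, s ihat ≤ s i) :
    ‖θ ihat - θs‖ ≤ 3 * r := by
  classical
  set G : Set (Fin N) := {n : Fin N | ‖θ n - θs‖ ≤ r} with hGdef
  have hNhalf : (0 : ℝ) < (N : ℝ) / 2 := by positivity
  have hkN : (N : ℝ) / 2 ≤ (N : ℝ) := by linarith
  -- G nonempty
  have hGne : G.Nonempty := by
    rw [Set.nonempty_iff_ne_empty]
    intro h
    rw [h] at hmaj
    simp at hmaj
    linarith
  obtain ⟨i0, hi0⟩ := hGne
  -- s ihat ≤ 2r
  have hbdd : ∀ i : Fin N, BddBelow {t : ℝ |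
      (N : ℝ) / 2 ≤ (({j : Fin N | ‖θ i - θ j‖ ≤ t} : Set (Fin N)).ncard : ℝ)} := by
    intro i
    refine ⟨0, fun t ht => ?_⟩
    simp only [Set.mem_setOf_eq] at ht
    by_contra hc
    push_neg at hc
    have : {j : Fin N | ‖θ i - θ j‖ ≤ t} = ∅ := by
      ext j
      simp only [Set.mem_setOf_eq, Set.mem_empty_iff_false, iff_false, not_le]
      exact lt_of_lt_of_le hc (norm_nonneg _)
    rw [this] at ht
    simp at ht
    linarith
  have hs2r : s ihat ≤ 2 * r := by
    refine le_trans (hihat i0) ?_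
    rw [hs i0]
    refine csInf_le (hbdd i0) ?_
    have hsub : G ⊆ {j : Fin N | ‖θ i0 - θ j‖ ≤ 2 * r} := by
      intro j hj
      simp only [hGdef, Set.mem_setOf_eq] at hj hi0 ⊢
      have h3 : ‖θ i0 - θ j‖ ≤ ‖θ i0 - θs‖ + ‖θs - θ j‖ := by
        have := dist_triangle (θ i0) θs (θ j)
        simpa [dist_eq_norm] using this
      have h4 : ‖θs - θ j‖ = ‖θ j - θs‖ := norm_sub_rev _ _
      linarith
    have := Set.ncard_le_ncard hsub (Set.toFinite _)
    simp only [Set.mem_setOf_eq]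
    refine le_trans hmaj.le ?_
    exact_mod_cast this
  -- count at s ihat
  have hmem := robust_sInf_mem (fun j => ‖θ ihat - θ j‖) ((N : ℝ) / 2) hkN hNhalf
  rw [← hs ihat] at hmem
  set A : Set (Fin N) := {j : Fin N | ‖θ ihat - θ j‖ ≤ s ihat} with hAdef
  have hA : (N : ℝ) / 2 ≤ (A.ncard : ℝ) := hmem
  -- A ∩ G nonempty
  have hAG : (A ∩ G).Nonempty := by
    rw [Set.nonempty_iff_ne_empty]
    intro h
    have hIE := Set.ncard_inter_add_ncard_union A G (Set.toFinite _) (Set.toFinite _)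
    have hUnion : (A ∪ G).ncard ≤ N := by
      have := Set.ncard_le_ncard (Set.subset_univ (A ∪ G)) (Set.toFinite _)
      simpa [Set.ncard_univ] using this
    rw [h] at hIE
    simp at hIE
    rw [hIE] at hUnion
    have : (A.ncard : ℝ) + (G.ncard : ℝ) ≤ (N : ℝ) := by exact_mod_cast hUnion
    linarith
  obtain ⟨j, hjA, hjG⟩ := hAG
  simp only [hAdef, Set.mem_setOf_eq] at hjA
  simp only [hGdef, Set.mem_setOf_eq] at hjG
  have htri : ‖θ ihat - θs‖ ≤ ‖θ ihat - θ j‖ + ‖θ j - θs‖ := by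
    have := dist_triangle (θ ihat) (θ j) θs
    simpa [dist_eq_norm] using this
  linarith
end

section
/- Let L : ℝ^d → ℝ be L-Lipschitz-smooth. Let G be a random vector with ‖αG‖ ≤ τ almost surely for a random clipping factor α ∈ [p,1] with E[α] = ᾱ, and suppose ‖E[αG] - ᾱ∇L(θ)‖ ≤ b and τ ≤ ‖∇L(θ)‖ + Q. Then E[L(θ - βαG)] - L(θ) ≤ -β ᾱ ‖∇L(θ)‖² + (Lβ²/2)(‖∇L(θ)‖ + Q)² + β‖∇L(θ)‖ b. -/
open MeasureTheory

theorem expected_descent_clipped_step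
    {d : ℕ} {Ω : Type*} [MeasurableSpace Ω] (μ : Measure Ω) [IsProbabilityMeasure μ]
    (L : EuclideanSpace ℝ (Fin d) → ℝ)
    (g : EuclideanSpace ℝ (Fin d) → EuclideanSpace ℝ (Fin d))
    (Lc : ℝ) (hLc : 0 ≤ Lc)
    (hsmooth : ∀ θ θ' : EuclideanSpace ℝ (Fin d),
      L θ' ≤ L θ + @inner ℝ _ _ (g θ) (θ' - θ) + Lc / 2 * ‖θ' - θ‖ ^ 2)
    (θ : EuclideanSpace ℝ (Fin d)) (β : ℝ) (hβ : 0 < β)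
    (α : Ω → ℝ) (G : Ω → EuclideanSpace ℝ (Fin d))
    (p τ Q b : ℝ) (hp : 0 < p) (hτ : 0 < τ) (hQ : 0 ≤ Q) (hb : 0 ≤ b)
    (hαrange : ∀ ω, p ≤ α ω ∧ α ω ≤ 1)
    (hclip : ∀ ω, ‖α ω • G ω‖ ≤ τ)
    (ᾱ : ℝ) (hᾱ : ᾱ = ∫ ω, α ω ∂μ)
    (hbias : ‖(∫ ω, α ω • G ω ∂μ) - ᾱ • g θ‖ ≤ b)
    (hτle : τ ≤ ‖g θ‖ + Q)
    (hintαG : Integrable (fun ω => α ω • G ω) μ)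
    (hintL : Integrable (fun ω => L (θ - β • (α ω • G ω))) μ) :
    (∫ ω, L (θ - β • (α ω • G ω)) ∂μ) - L θ ≤
      -(β * ᾱ * ‖g θ‖ ^ 2) + Lc * β ^ 2 / 2 * (‖g θ‖ + Q) ^ 2 + β * ‖g θ‖ * b := by
  set M : EuclideanSpace ℝ (Fin d) := ∫ ω, α ω • G ω ∂μ with hM
  -- pointwise bound
  have hpt : ∀ ω, L (θ - β • (α ω • G ω)) ≤
      L θ + @inner ℝ _ _ (g θ) (-(β • (α ω • G ω))) + Lc / 2 * (β * τ) ^ 2 := by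
    intro ω
    have h := hsmooth θ (θ - β • (α ω • G ω))
    have hsub : θ - β • (α ω • G ω) - θ = -(β • (α ω • G ω)) := by abel
    rw [hsub] at h
    refine h.trans ?_
    have hnorm : ‖-(β • (α ω • G ω))‖ ≤ β * τ := by
      rw [norm_neg, norm_smul, Real.norm_eq_abs, abs_of_pos hβ]
      exact mul_le_mul_of_nonneg_left (hclip ω) hβ.le
    have hsq : ‖-(β • (α ω • G ω))‖ ^ 2 ≤ (β * τ)^2 := by
      exact pow_le_pow_left₀ (norm_nonneg _) hnorm 2
    nlinarith [norm_nonneg (-(β • (α ω • G ω)))]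
  have hintRHS : Integrable (fun ω =>
      L θ + @inner ℝ _ _ (g θ) (-(β • (α ω • G ω))) + Lc / 2 * (β * τ) ^ 2) μ := by
    apply Integrable.add _ (integrable_const _)
    apply Integrable.add (integrable_const _)
    have : Integrable (fun ω => -(β • (α ω • G ω))) μ := (hintαG.smul β).neg
    exact (ContinuousLinearMap.integrable_comp (innerSL ℝ (g θ)) this)
  have hle : (∫ ω, L (θ - β • (α ω • G ω)) ∂μ) ≤
      ∫ ω, (L θ + @inner ℝ _ _ (g θ) (-(β • (α ω • G ω))) + Lc / 2 * (β * τ) ^ 2) ∂μ :=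
    integral_mono hintL hintRHS hpt
  have hint1 : Integrable (fun ω => @inner ℝ _ _ (g θ) (-(β • (α ω • G ω)))) μ :=
    ContinuousLinearMap.integrable_comp (innerSL ℝ (g θ)) ((hintαG.smul β).neg)
  have hval : (∫ ω, (L θ + @inner ℝ _ _ (g θ) (-(β • (α ω • G ω))) + Lc / 2 * (β * τ) ^ 2) ∂μ)
      = L θ + @inner ℝ _ _ (g θ) (-(β • M)) + Lc / 2 * (β * τ) ^ 2 := by
    have e1 : (∫ ω, (L θ + @inner ℝ _ _ (g θ) (-(β • (α ω • G ω))) + Lc / 2 * (β * τ) ^ 2) ∂μ)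
        = (∫ ω, (L θ + @inner ℝ _ _ (g θ) (-(β • (α ω • G ω)))) ∂μ)
          + ∫ _ω, (Lc / 2 * (β * τ) ^ 2 : ℝ) ∂μ :=
      integral_add ((integrable_const _).add hint1) (integrable_const _)
    have e2 : (∫ ω, (L θ + @inner ℝ _ _ (g θ) (-(β • (α ω • G ω)))) ∂μ)
        = (∫ _ω, (L θ : ℝ) ∂μ) + ∫ ω, @inner ℝ _ _ (g θ) (-(β • (α ω • G ω))) ∂μ :=
      integral_add (integrable_const _) hint1
    have e3 : (∫ ω, @inner ℝ _ _ (g θ) (-(β • (α ω • G ω))) ∂μ)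
        = @inner ℝ _ _ (g θ) (∫ ω, -(β • (α ω • G ω)) ∂μ) :=
      (innerSL ℝ (g θ)).integral_comp_comm (show Integrable (fun ω => -(β • (α ω • G ω))) μ from
        (hintαG.smul β).neg)
    have e4 : (∫ ω, -(β • (α ω • G ω)) ∂μ) = -(β • M) := by
      rw [integral_neg, integral_smul]
    rw [e1, e2, e3, e4, integral_const, integral_const]
    simp [measure_univ]
  -- inner product bound
  have hcs : |@inner ℝ _ _ (g θ) (M - ᾱ • g θ)| ≤ ‖g θ‖ * b := by
    calc |@inner ℝ _ _ (g θ) (M - ᾱ • g θ)| ≤ ‖g θ‖ * ‖M - ᾱ • g θ‖ :=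
        abs_real_inner_le_norm _ _
    _ ≤ ‖g θ‖ * b := mul_le_mul_of_nonneg_left hbias (norm_nonneg _)
  have hinner : @inner ℝ _ _ (g θ) M ≥ ᾱ * ‖g θ‖ ^ 2 - ‖g θ‖ * b := by
    have h1 : @inner ℝ _ _ (g θ) (M - ᾱ • g θ)
        = @inner ℝ _ _ (g θ) M - ᾱ * ‖g θ‖ ^ 2 := by
      rw [inner_sub_right, real_inner_smul_right, real_inner_self_eq_norm_sq]
    rw [h1] at hcs
    have := abs_le.mp hcs
    linarith [this.1]
  have hinnerM : @inner ℝ _ _ (g θ) (-(β • M)) = -(β * @inner ℝ _ _ (g θ) M) := by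
    rw [inner_neg_right, real_inner_smul_right]
  have hτsq : (β * τ)^2 ≤ β^2 * (‖g θ‖ + Q)^2 := by
    have : τ^2 ≤ (‖g θ‖ + Q)^2 := pow_le_pow_left₀ hτ.le hτle 2
    nlinarith [sq_nonneg β]
  rw [hval, hinnerM] at hle
  nlinarith [mul_le_mul_of_nonneg_left hinner hβ.le]
end
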